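/- arXiv:2602.09539 — 2 statements merged into one kernel-verified Lean document; each statement's English description precedes it below -/
import Mathlib

section
/- Matrix CUR exactness: Let A ∈ K^{m×n} be a matrix, I ⊂ {1,…,m} and J ⊂ {1,…,n} index sets, and set C = A(:,J), R = A(I,:), U = A(I,J). If rank(U) = rank(A), then A = C U^+ R, where U^+ is the Moore–Penrose pseudoinverse of U. -/
open Matrix

variable {K : Type*} [RCLike K]

/-- Inclusion of a finite index set into the full index type. -/
def inc {m : ℕ} (I : Finset (Fin m)) : ↥I → Fin m := Subtype.val

/-- Spectral (operator 2-) norm of a matrix. -/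
noncomputable def specNorm {ι κ : Type*} [Fintype ι] [Fintype κ] [DecidableEq κ]
    (A : Matrix ι κ K) : ℝ :=
  ‖LinearMap.toContinuousLinearMap (Matrix.toEuclideanLin A)‖

/-- Mode-3 product of a third-order tensor (stack of frontal slices) with a matrix. -/
def mode3 {ι κ : Type*} {p q : ℕ} (A : Fin p → Matrix ι κ K)
    (M : Matrix (Fin q) (Fin p) K) : Fin q → Matrix ι κ K :=
  fun k => ∑ j, M k j • A j

/-- Facewise (slice-wise) product of third-order tensors. -/
def facewise {ι κ μ : Type*} [Fintype κ] {p : ℕ}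
    (X : Fin p → Matrix ι κ K) (Y : Fin p → Matrix κ μ K) : Fin p → Matrix ι μ K :=
  fun k => X k * Y k

/-- The linear-map-based tensor-tensor multiplication (`*_M` product). -/
noncomputable def mProd {ι κ μ : Type*} [Fintype κ] {p : ℕ}
    (A : Fin p → Matrix ι κ K) (B : Fin p → Matrix κ μ K)
    (M : Matrix (Fin p) (Fin p) K) : Fin p → Matrix ι μ K :=
  mode3 (facewise (mode3 A M) (mode3 B M)) M⁻¹

/-- Tensor spectral norm with respect to the `*_M` product. -/
noncomputable def tnorm {ι κ : Type*} [Fintype ι] [Fintype κ] [DecidableEq κ] {p : ℕ}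
    (A : Fin p → Matrix ι κ K) (M : Matrix (Fin p) (Fin p) K) : ℝ :=
  ⨆ k, specNorm ((mode3 A M) k)

/-- The four Penrose conditions: `V` is the Moore–Penrose pseudoinverse of `U`. -/
def IsMoorePenrose {ι κ : Type*} [Fintype ι] [Fintype κ]
    (U : Matrix ι κ K) (V : Matrix κ ι K) : Prop :=
  U * V * U = U ∧ V * U * V = V ∧ (U * V)ᴴ = U * V ∧ (V * U)ᴴ = V * U

/-- The `r`-th largest singular value of a matrix (1-indexed), i.e. the `r`-th largest
square root of an eigenvalue of `Uᴴ * U`. -/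
noncomputable def singularValue {ι κ : Type*} [Fintype ι] [Fintype κ] [DecidableEq κ]
    (U : Matrix ι κ K) (r : ℕ) : ℝ :=
  ((((Finset.univ.val).map (fun i =>
      Real.sqrt ((Matrix.isHermitian_conjTranspose_mul_self U).eigenvalues i))).sort
      (· ≤ ·)).reverse).getD (r - 1) 0

lemma sub_col {ι κ : Type*} {n : ℕ} (A : Matrix ι (Fin n) K) (g : κ → Fin n) :
    A.submatrix id g = A * (1 : Matrix (Fin n) (Fin n) K).submatrix id g := by
  ext i j
  simp [mul_apply, one_apply, Finset.sum_ite_eq]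

lemma sub_row {ι κ : Type*} {m : ℕ} (A : Matrix (Fin m) ι K) (f : κ → Fin m) :
    A.submatrix f id = (1 : Matrix (Fin m) (Fin m) K).submatrix f id * A := by
  ext i j
  simp [mul_apply, one_apply, Finset.sum_ite_eq]

/-- matrix CUR exactness. -/
theorem matrix_CUR_exact {m n : ℕ} (A : Matrix (Fin m) (Fin n) K)
    (I : Finset (Fin m)) (J : Finset (Fin n)) (Up : Matrix ↥J ↥I K)
    (hUp : IsMoorePenrose (A.submatrix (inc I) (inc J)) Up)
    (hrank : (A.submatrix (inc I) (inc J)).rank = A.rank) :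
    A = A.submatrix id (inc J) * Up * A.submatrix (inc I) id := by
  obtain ⟨h1, -, -, -⟩ := hUp
  set U : Matrix ↥I ↥J K := A.submatrix (inc I) (inc J) with hU
  set R : Matrix ↥I (Fin n) K := A.submatrix (inc I) id with hR
  set C : Matrix (Fin m) ↥J K := A.submatrix id (inc J) with hC
  set Q : Matrix (Fin n) ↥J K := (1 : Matrix (Fin n) (Fin n) K).submatrix id (inc J) with hQ
  set P : Matrix ↥I (Fin m) K := (1 : Matrix (Fin m) (Fin m) K).submatrix (inc I) id with hP
  have hU_RQ : U = R * Q := by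
    rw [hU, hR, ← sub_col]
    rfl
  have hR_PA : R = P * A := sub_row A (inc I)
  have hC_AQ : C = A * Q := sub_col A (inc J)
  -- rank chain
  have hUR : U.rank ≤ R.rank := hU_RQ ▸ Matrix.rank_mul_le_left R Q
  have hRA : R.rank ≤ A.rank := hR_PA ▸ Matrix.rank_mul_le_right P A
  have hRrank : R.rank = A.rank := le_antisymm hRA (hrank ▸ hUR)
  have hURrank : U.rank = R.rank := hRrank ▸ hrank
  -- column space of U = column space of R
  have hrangeU : LinearMap.range U.mulVecLin = LinearMap.range R.mulVecLin := by
    apply Submodule.eq_of_le_of_finrank_le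
    · rw [hU_RQ, Matrix.mulVecLin_mul]
      exact LinearMap.range_comp_le_range _ _
    · exact le_of_eq hURrank.symm
  -- R = U * Z
  have hz : ∀ j : Fin n, ∃ z : ↥J → K, U.mulVec z = fun i => R i j := by
    intro j
    have : (fun i => R i j) ∈ LinearMap.range R.mulVecLin := by
      refine ⟨Pi.single j 1, ?_⟩
      ext i
      simp [Matrix.mulVecLin, Matrix.mulVec_single]
    rw [← hrangeU] at this
    exact this
  set Z : Matrix ↥J (Fin n) K := Matrix.of fun i j => Classical.choose (hz j) i with hZ
  have hRZ : R = U * Z := by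
    ext i j
    have := congrFun (Classical.choose_spec (hz j)) i
    simpa [Matrix.mulVec, dotProduct, mul_apply, hZ] using this.symm
  -- row space: A = X * R, via transposes
  have hrangeRT : LinearMap.range Rᵀ.mulVecLin = LinearMap.range Aᵀ.mulVecLin := by
    apply Submodule.eq_of_le_of_finrank_le
    · rw [hR_PA, Matrix.transpose_mul, Matrix.mulVecLin_mul]
      exact LinearMap.range_comp_le_range _ _
    · have : Rᵀ.rank = Aᵀ.rank := by
        rw [Matrix.rank_transpose, Matrix.rank_transpose, hRrank]
      exact le_of_eq this.symm
  have hw : ∀ i : Fin m, ∃ w : ↥I → K, Rᵀ.mulVec w = fun j => A i j := by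
    intro i
    have : (fun j => Aᵀ j i) ∈ LinearMap.range Aᵀ.mulVecLin := by
      refine ⟨Pi.single i 1, ?_⟩
      ext j
      simp [Matrix.mulVecLin, Matrix.mulVec_single]
    rw [← hrangeRT] at this
    exact this
  set X : Matrix (Fin m) ↥I K := Matrix.of fun i k => Classical.choose (hw i) k with hX
  have hA : A = X * R := by
    ext i j
    have := congrFun (Classical.choose_spec (hw i)) j
    simpa [Matrix.mulVec, dotProduct, mul_apply, hX, mul_comm] using this.symm
  have hCU : C = X * U := by
    rw [hC_AQ, hA, Matrix.mul_assoc, ← hU_RQ]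
  calc A = X * R := hA
    _ = X * (U * Up * U * Z) := by rw [h1, ← hRZ]
    _ = C * Up * R := by rw [hCU, hRZ]; simp only [Matrix.mul_assoc]
end

section
/- Tensor *_M-CUR exactness: Let M ∈ K^{p×p} be invertible and A ∈ K^{m×n×p}. Fix index sets I ⊂ {1,…,m}, J ⊂ {1,…,n}, and set C = A(:,J,:), R = A(I,:,:), U = A(I,J,:). Suppose that for every k = 1,…,p, rank(Û^{(k)}) = rank(Â^{(k)}), where Â = A ×_3 M and Û = U ×_3 M. Define U^+ as the tensor whose frontal slices in the transformed domain are the matrix pseudoinverses (Û^{(k)})^+, mapped back by ×_3 M^{-1}. Then A = C *_M U^+ *_M R. -/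
open Matrix

variable {K : Type*} [RCLike K]

/-- Column-selection matrix. -/
def sel {a b : Type*} [DecidableEq a] (f : b → a) : Matrix a b K :=
  Matrix.of fun i j => if f j = i then 1 else 0

lemma mul_sel {a b c : Type*} [Fintype a] [DecidableEq a] (B : Matrix c a K) (f : b → a) :
    B * sel (K := K) f = B.submatrix id f := by
  ext r j
  simp [Matrix.mul_apply, sel, mul_ite, Finset.sum_ite_eq]

lemma sel_mul {a b c : Type*} [Fintype a] [DecidableEq a] (B : Matrix a c K) (f : b → a) :
    (sel (K := K) f)ᵀ * B = B.submatrix f id := by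
  ext j r
  simp [Matrix.mul_apply, sel, Matrix.transpose_apply, ite_mul, Finset.sum_ite_eq]

lemma exists_factor {a b c : Type*} [Fintype a] [Fintype b] [Fintype c] [DecidableEq c]
    (B : Matrix a c K) (C : Matrix a b K)
    (h : LinearMap.range B.mulVecLin ≤ LinearMap.range C.mulVecLin) :
    ∃ X : Matrix b c K, C * X = B := by
  choose x hx using fun i : c => h (LinearMap.mem_range_self _ (Pi.single i 1))
  refine ⟨Matrix.of fun j i => x i j, ?_⟩
  ext r i
  have h2 := congrFun (hx i) r
  simp only [Matrix.mulVecLin_apply, Matrix.mulVec_single] at h2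
  rw [Matrix.mul_apply]
  calc ∑ j, C r j * (Matrix.of fun j i => x i j) j i
      = C.mulVec (x i) r := by simp [Matrix.mulVec, dotProduct]
    _ = B r i := by rw [h2]; simp

lemma range_le_of_eq_mul {a b c : Type*} [Fintype a] [Fintype b] [Fintype c]
    (B : Matrix a b K) (E : Matrix b c K) :
    LinearMap.range (B * E).mulVecLin ≤ LinearMap.range B.mulVecLin := by
  rw [Matrix.mulVecLin_mul]
  exact LinearMap.range_comp_le_range _ _

lemma range_eq_of_le_of_rank {a b c : Type*} [Fintype a] [Fintype b] [Fintype c]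
    (B : Matrix a b K) (C : Matrix a c K)
    (hle : LinearMap.range C.mulVecLin ≤ LinearMap.range B.mulVecLin)
    (hr : B.rank ≤ C.rank) :
    LinearMap.range C.mulVecLin = LinearMap.range B.mulVecLin :=
  Submodule.eq_of_le_of_finrank_le hle hr

/-- Matrix CUR exactness. -/
lemma matrix_CUR {m n : ℕ} (B : Matrix (Fin m) (Fin n) K)
    (I : Finset (Fin m)) (J : Finset (Fin n)) (V : Matrix ↥J ↥I K)
    (hV : B.submatrix (inc I) (inc J) * V * B.submatrix (inc I) (inc J)
        = B.submatrix (inc I) (inc J))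
    (hrank : (B.submatrix (inc I) (inc J)).rank = B.rank) :
    B.submatrix id (inc J) * V * B.submatrix (inc I) id = B := by
  set C := B.submatrix id (inc J) with hC
  set R := B.submatrix (inc I) id with hR
  set U := B.submatrix (inc I) (inc J) with hU
  -- factorizations via selection matrices
  have hCe : B * sel (K := K) (inc J) = C := mul_sel B (inc J)
  have hRe : (sel (K := K) (inc I))ᵀ * B = R := sel_mul B (inc I)
  have hUC : (sel (K := K) (inc I))ᵀ * C = U := by
    rw [sel_mul]; simp [hC, hU, Matrix.submatrix_submatrix]
  have hUR : R * sel (K := K) (inc J) = U := by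
    rw [hR, ← hCe] at *
    rw [mul_sel]; simp [hU, Matrix.submatrix_submatrix]
  -- rank chain
  have hrCB : C.rank ≤ B.rank := by rw [← hCe]; exact Matrix.rank_mul_le_left _ _
  have hrUC : U.rank ≤ C.rank := by rw [← hUC]; exact Matrix.rank_mul_le_right _ _
  have hrBC : B.rank ≤ C.rank := hrank ▸ hrUC
  have hrCU : C.rank ≤ U.rank := hrank ▸ hrCB
  -- column factorization : B = C * X
  have hrangeC : LinearMap.range C.mulVecLin ≤ LinearMap.range B.mulVecLin := by
    rw [← hCe]; exact range_le_of_eq_mul _ _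
  have hrangeEq := range_eq_of_le_of_rank B C hrangeC hrBC
  obtain ⟨X, hX⟩ := exists_factor B C (le_of_eq hrangeEq.symm)
  -- row factorization : C = Y * U
  have hUTe : Cᵀ * sel (K := K) (inc I) = Uᵀ := by
    rw [← hUC, Matrix.transpose_mul, Matrix.transpose_transpose]
  have hrangeU : LinearMap.range Uᵀ.mulVecLin ≤ LinearMap.range Cᵀ.mulVecLin := by
    rw [← hUTe]; exact range_le_of_eq_mul _ _
  have hrT : Cᵀ.rank ≤ Uᵀ.rank := by
    rw [Matrix.rank_transpose, Matrix.rank_transpose]; exact hrCU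
  have hrangeEq2 := range_eq_of_le_of_rank Cᵀ Uᵀ hrangeU hrT
  obtain ⟨Y, hY⟩ := exists_factor Cᵀ Uᵀ (le_of_eq hrangeEq2.symm)
  have hCY : Yᵀ * U = C := by
    have := congrArg Matrix.transpose hY
    rwa [Matrix.transpose_mul, Matrix.transpose_transpose, Matrix.transpose_transpose] at this
  -- R = U * X
  have hRUX : R = U * X := by
    rw [← hRe, ← hX, ← Matrix.mul_assoc, hUC]
  calc C * V * R = Yᵀ * (U * V * U) * X := by
        rw [hRUX, ← hCY]; simp only [Matrix.mul_assoc]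
    _ = C * X := by rw [hV, hCY]
    _ = B := hX


lemma mode3_mode3 {ι κ : Type*} {p q r : ℕ} (A : Fin p → Matrix ι κ K)
    (N : Matrix (Fin q) (Fin p) K) (M : Matrix (Fin r) (Fin q) K) :
    mode3 (mode3 A N) M = mode3 A (M * N) := by
  funext k
  simp only [mode3, Finset.smul_sum, smul_smul]
  rw [Finset.sum_comm]
  refine Finset.sum_congr rfl fun j _ => ?_
  rw [← Finset.sum_smul, Matrix.mul_apply]

lemma mode3_one {ι κ : Type*} {p : ℕ} (A : Fin p → Matrix ι κ K) :
    mode3 A (1 : Matrix (Fin p) (Fin p) K) = A := by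
  funext k
  simp [mode3, Matrix.one_apply, ite_smul, Finset.sum_ite_eq]

lemma mode3_submatrix {ι κ ι' κ' : Type*} {p q : ℕ} (A : Fin p → Matrix ι κ K)
    (M : Matrix (Fin q) (Fin p) K) (f : ι' → ι) (g : κ' → κ) (k : Fin q) :
    (mode3 (fun t => (A t).submatrix f g) M) k = ((mode3 A M) k).submatrix f g := by
  ext i j
  simp [mode3, Matrix.sum_apply]


/-- tensor `*_M`-CUR exactness. -/
theorem tensor_CUR_exact {m n p : ℕ} (M : Matrix (Fin p) (Fin p) K) (hM : IsUnit M.det)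
    (A : Fin p → Matrix (Fin m) (Fin n) K)
    (I : Finset (Fin m)) (J : Finset (Fin n))
    (Up : Fin p → Matrix ↥J ↥I K)
    (hUp : ∀ k, IsMoorePenrose
      ((mode3 (fun k => (A k).submatrix (inc I) (inc J)) M) k) (Up k))
    (hrank : ∀ k, ((mode3 (fun k => (A k).submatrix (inc I) (inc J)) M) k).rank
      = ((mode3 A M) k).rank) :
    A = mProd (mProd (fun k => (A k).submatrix id (inc J)) (mode3 Up M⁻¹) M)
          (fun k => (A k).submatrix (inc I) id) M := by
  have hMM : M⁻¹ * M = 1 := Matrix.nonsing_inv_mul M hM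
  have hMM' : M * M⁻¹ = 1 := Matrix.mul_nonsing_inv M hM
  have key : ∀ k, (mode3 (fun t => (A t).submatrix id (inc J)) M) k * Up k *
      (mode3 (fun t => (A t).submatrix (inc I) id) M) k = (mode3 A M) k := by
    intro k
    rw [mode3_submatrix, mode3_submatrix]
    refine matrix_CUR ((mode3 A M) k) I J (Up k) ?_ ?_
    · have := (hUp k).1
      rwa [mode3_submatrix] at this
    · have := hrank k
      rwa [mode3_submatrix] at this
  simp only [mProd, mode3_mode3, hMM', mode3_one]
  have hfac : facewise (facewise (mode3 (fun t => (A t).submatrix id (inc J)) M) Up)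
      (mode3 (fun t => (A t).submatrix (inc I) id) M) = mode3 A M := by
    funext k
    simpa [facewise] using key k
  rw [hfac, mode3_mode3, hMM, mode3_one]
end
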